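/- arXiv:1201.0658 — 2 statements merged into one kernel-verified Lean document; each statement's English description precedes it below -/
import Mathlib

section
/- Let w be a positive non-decreasing weight function with diverging W. For any β < α_c(w), the series ∑ₙ 1 / w(n + W⁻¹(W(n)+β)) diverges. -/
/-!
Write `g(x) = W⁻¹(W(x) + β)`. Since `1/w` is non-increasing, the increments of `W` over intervals
of a fixed length decrease as the interval moves right; comparing `[g(x), g(x) + x]` with
`[x, 2x]` gives `x + g(x) ≤ g(2x)`. As `x ↦ 1/w(g(x))` is non-increasing, grouping the unit
intervals in pairs bounds `I_β(w) = ∫₀^∞ dx / w(g(x))` by `2 ∑ₘ 1/w(m + g(m))`. A convergent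
series would thus give `I_β(w) < ∞`, i.e. `α_c(w) ≤ β`.
-/

open MeasureTheory Filter Topology Set
open scoped ENNReal NNReal

noncomputable section

/-- Extension of a weight sequence to the reals: `w(t) = w(⌊t⌋)` (and `w 0` for `t < 0`). -/
def wext (w : ℕ → ℝ) (t : ℝ) : ℝ := w ⌊t⌋₊

/-- `W(t) = ∫₀ᵗ du / w(u)`. -/
def Wfun (v : ℝ → ℝ) (t : ℝ) : ℝ := ∫ u in (0:ℝ)..t, (v u)⁻¹

/-- `I_α(w) = ∫₀^∞ dx / w(W⁻¹(W(x)+α))`, valued in `[0,∞]`. -/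
def Ia (v : ℝ → ℝ) (Winv : ℝ → ℝ) (α : ℝ) : ℝ≥0∞ :=
  ∫⁻ x in Ioi (0:ℝ), ENNReal.ofReal (v (Winv (Wfun v x + α)))⁻¹

/-- The critical parameter `α_c(w) = inf {α ≥ 0 : I_α(w) < ∞} ∈ [0,∞]` (inf ∅ = ∞). -/
def alphac (v : ℝ → ℝ) (Winv : ℝ → ℝ) : ℝ≥0∞ :=
  sInf (ENNReal.ofReal '' {α : ℝ | 0 < α ∧ Ia v Winv α < ⊤})

lemma lintegral_Ioi_le_tsum_of_antitoneOn {f : ℝ → ℝ≥0∞} (hf : AntitoneOn f (Ici 0)) :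
    ∫⁻ x in Ioi 0, f x ≤ ∑' n : ℕ, f n := by
  have hcover : Ioi (0 : ℝ) ⊆ ⋃ n : ℕ, Ico (n : ℝ) (n + 1) := fun x hx =>
    mem_iUnion.2 ⟨⌊x⌋₊, Nat.floor_le (le_of_lt hx), Nat.lt_floor_add_one x⟩
  have hpiece (n : ℕ) : ∫⁻ x in Ico (n : ℝ) (n + 1), f x ≤ f n :=
    calc ∫⁻ x in Ico (n : ℝ) (n + 1), f x
        ≤ ∫⁻ _ in Ico (n : ℝ) (n + 1), f n :=
          setLIntegral_mono measurable_const fun x hx =>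
            hf (mem_Ici.2 n.cast_nonneg) (mem_Ici.2 (n.cast_nonneg.trans hx.1)) hx.1
      _ = f n := by simp [Real.volume_Ico]
  calc ∫⁻ x in Ioi 0, f x
      ≤ ∫⁻ x in ⋃ n : ℕ, Ico (n : ℝ) (n + 1), f x := lintegral_mono_set hcover
    _ ≤ ∑' n : ℕ, ∫⁻ x in Ico (n : ℝ) (n + 1), f x := lintegral_iUnion_le _ _
    _ ≤ ∑' n : ℕ, f n := ENNReal.tsum_le_tsum hpiece

lemma wext_pos {w : ℕ → ℝ} (hpos : ∀ n, 0 < w n) (t : ℝ) : 0 < wext w t := hpos _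

lemma monotone_wext {w : ℕ → ℝ} (hmono : Monotone w) : Monotone (wext w) :=
  fun _ _ hab => hmono (Nat.floor_mono hab)

section Wfun

variable {v : ℝ → ℝ}

lemma antitone_inv_of_monotone (hv_pos : ∀ t, 0 < v t) (hv : Monotone v) :
    Antitone fun t => (v t)⁻¹ :=
  fun _ _ hab => inv_anti₀ (hv_pos _) (hv hab)

lemma Wfun_zero : Wfun v 0 = 0 := intervalIntegral.integral_same

lemma Wfun_sub_Wfun (hv_pos : ∀ t, 0 < v t) (hv : Monotone v) (a b : ℝ) :
    Wfun v b - Wfun v a = ∫ u in a..b, (v u)⁻¹ :=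
  intervalIntegral.integral_interval_sub_left
    (antitone_inv_of_monotone hv_pos hv).intervalIntegrable
    (antitone_inv_of_monotone hv_pos hv).intervalIntegrable

lemma strictMono_Wfun (hv_pos : ∀ t, 0 < v t) (hv : Monotone v) : StrictMono (Wfun v) := by
  intro a b hab
  have hinc : 0 < ∫ u in a..b, (v u)⁻¹ :=
    intervalIntegral.intervalIntegral_pos_of_pos_on
      (antitone_inv_of_monotone hv_pos hv).intervalIntegrable
      (fun u _ => inv_pos.2 (hv_pos u)) hab
  linarith [Wfun_sub_Wfun hv_pos hv a b]

lemma Wfun_nonneg (hv_pos : ∀ t, 0 < v t) (hv : Monotone v) {x : ℝ} (hx : 0 ≤ x) :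
    0 ≤ Wfun v x :=
  Wfun_zero (v := v) ▸ (strictMono_Wfun hv_pos hv).monotone hx

lemma Wfun_add_sub_Wfun_add_le (hv_pos : ∀ t, 0 < v t) (hv : Monotone v) {a b c : ℝ}
    (hab : a ≤ b) (hc : 0 ≤ c) :
    Wfun v (b + c) - Wfun v (a + c) ≤ Wfun v b - Wfun v a := by
  rw [Wfun_sub_Wfun hv_pos hv, Wfun_sub_Wfun hv_pos hv,
    ← intervalIntegral.integral_comp_add_right]
  have hshift : Antitone fun u => (v (u + c))⁻¹ :=
    fun x y hxy => inv_anti₀ (hv_pos _) (hv (by linarith))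
  exact intervalIntegral.integral_mono_on hab hshift.intervalIntegrable
    (antitone_inv_of_monotone hv_pos hv).intervalIntegrable
    fun u _ => inv_anti₀ (hv_pos u) (hv (by linarith))

variable {Winv : ℝ → ℝ} {β : ℝ}

lemma monotoneOn_Winv (hv_pos : ∀ t, 0 < v t) (hv : Monotone v)
    (hWinv : ∀ y, 0 ≤ y → Wfun v (Winv y) = y) : MonotoneOn Winv (Ici 0) :=
  fun y₁ h₁ y₂ h₂ h => (strictMono_Wfun hv_pos hv).le_iff_le.mp
    (by rwa [hWinv y₁ h₁, hWinv y₂ h₂])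

lemma monotoneOn_Winv_Wfun_add (hv_pos : ∀ t, 0 < v t) (hv : Monotone v)
    (hWinv : ∀ y, 0 ≤ y → Wfun v (Winv y) = y) (hβ : 0 ≤ β) :
    MonotoneOn (fun x => Winv (Wfun v x + β)) (Ici 0) := fun _ hx _ hy hxy =>
  monotoneOn_Winv hv_pos hv hWinv
    (add_nonneg (Wfun_nonneg hv_pos hv hx) hβ) (add_nonneg (Wfun_nonneg hv_pos hv hy) hβ)
    (add_le_add_left ((strictMono_Wfun hv_pos hv).monotone hxy) β)

lemma le_Winv_Wfun_add (hv_pos : ∀ t, 0 < v t) (hv : Monotone v)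
    (hWinv : ∀ y, 0 ≤ y → Wfun v (Winv y) = y) (hβ : 0 ≤ β) {x : ℝ} (hx : 0 ≤ x) :
    x ≤ Winv (Wfun v x + β) := by
  refine (strictMono_Wfun hv_pos hv).le_iff_le.mp ?_
  rw [hWinv _ (add_nonneg (Wfun_nonneg hv_pos hv hx) hβ)]
  linarith

lemma add_Winv_le_Winv_Wfun_two_mul (hv_pos : ∀ t, 0 < v t) (hv : Monotone v)
    (hWinv : ∀ y, 0 ≤ y → Wfun v (Winv y) = y) (hβ : 0 ≤ β) {x : ℝ} (hx : 0 ≤ x) :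
    x + Winv (Wfun v x + β) ≤ Winv (Wfun v (2 * x) + β) := by
  set y := Winv (Wfun v x + β)
  have hxy : x ≤ y := le_Winv_Wfun_add hv_pos hv hWinv hβ hx
  have hWy : Wfun v y = Wfun v x + β :=
    hWinv _ (add_nonneg (Wfun_nonneg hv_pos hv hx) hβ)
  have hshift := Wfun_add_sub_Wfun_add_le hv_pos hv (a := x) (b := 2 * x) (c := y - x)
    (by linarith) (by linarith)
  rw [show 2 * x + (y - x) = x + y by ring, show x + (y - x) = y by ring] at hshift
  refine (strictMono_Wfun hv_pos hv).le_iff_le.mp ?_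
  rw [hWinv _ (add_nonneg (Wfun_nonneg hv_pos hv (by linarith)) hβ)]
  linarith

theorem Ia_lt_top_of_summable (hv_pos : ∀ t, 0 < v t) (hv : Monotone v)
    (hWinv : ∀ y, 0 ≤ y → Wfun v (Winv y) = y) (hβ : 0 ≤ β)
    (hsum : Summable fun n : ℕ => (v (n + Winv (Wfun v n + β)))⁻¹) :
    Ia v Winv β < ⊤ := by
  set F : ℝ → ℝ≥0∞ := fun x => ENNReal.ofReal (v (Winv (Wfun v x + β)))⁻¹
  set H : ℕ → ℝ≥0∞ := fun m => ENNReal.ofReal (v (m + Winv (Wfun v m + β)))⁻¹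
  have hF : AntitoneOn F (Ici 0) := fun x hx y hy hxy =>
    ENNReal.ofReal_le_ofReal <| inv_anti₀ (hv_pos _) <| hv <|
      monotoneOn_Winv_Wfun_add hv_pos hv hWinv hβ hx hy hxy
  have hFH (m k : ℕ) (hk : 2 * m ≤ k) : F k ≤ H m := by
    have hm : (0 : ℝ) ≤ m := Nat.cast_nonneg m
    calc F k ≤ F (2 * m) :=
          hF (mem_Ici.2 (by positivity)) (mem_Ici.2 k.cast_nonneg) (by exact_mod_cast hk)
      _ ≤ H m := ENNReal.ofReal_le_ofReal <| inv_anti₀ (hv_pos _) <|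
          hv (add_Winv_le_Winv_Wfun_two_mul hv_pos hv hWinv hβ hm)
  have hH : ∑' m, H m ≠ ⊤ := by
    rw [← ENNReal.ofReal_tsum_of_nonneg (fun _ => inv_nonneg.2 (hv_pos _).le) hsum]
    exact ENNReal.ofReal_ne_top
  calc Ia v Winv β ≤ ∑' n : ℕ, F n := lintegral_Ioi_le_tsum_of_antitoneOn hF
    _ = ∑' m : ℕ, F ↑(2 * m) + ∑' m : ℕ, F ↑(2 * m + 1) :=
      (tsum_even_add_odd ENNReal.summable ENNReal.summable).symm
    _ ≤ ∑' m, H m + ∑' m, H m :=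
      add_le_add (ENNReal.tsum_le_tsum fun m => hFH m _ le_rfl)
        (ENNReal.tsum_le_tsum fun m => hFH m _ (Nat.le_succ _))
    _ < ⊤ := ENNReal.add_lt_top.2 ⟨hH.lt_top, hH.lt_top⟩

end Wfun

theorem stmt16_general (w : ℕ → ℝ) (hpos : ∀ n, 0 < w n) (hmono : Monotone w)
    (Winv : ℝ → ℝ)
    (hWinv' : ∀ y : ℝ, 0 ≤ y → Wfun (wext w) (Winv y) = y)
    (β : ℝ) (hβpos : 0 < β) (hβ : ENNReal.ofReal β < alphac (wext w) Winv) :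
    ¬ Summable (fun n : ℕ =>
        (wext w ((n : ℝ) + Winv (Wfun (wext w) n + β)))⁻¹) := by
  intro hsum
  have hIa : Ia (wext w) Winv β < ⊤ :=
    Ia_lt_top_of_summable (wext_pos hpos) (monotone_wext hmono) hWinv' hβpos.le hsum
  exact hβ.not_ge (sInf_le ⟨β, ⟨hβpos, hIa⟩, rfl⟩)

/-- for any `0 < β < α_c(w)`, the series
`∑ₙ 1/w(n + W⁻¹(W(n)+β))` diverges. -/
theorem stmt16 (w : ℕ → ℝ) (hpos : ∀ n, 0 < w n) (hmono : Monotone w)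
    (hdiv : ¬ Summable (fun n : ℕ => (w n)⁻¹))
    (Winv : ℝ → ℝ)
    (hWinv : ∀ t : ℝ, 0 ≤ t → Winv (Wfun (wext w) t) = t)
    (hWinv' : ∀ y : ℝ, 0 ≤ y → Wfun (wext w) (Winv y) = y)
    (β : ℝ) (hβpos : 0 < β) (hβ : ENNReal.ofReal β < alphac (wext w) Winv) :
    ¬ Summable (fun n : ℕ =>
        (wext w ((n : ℝ) + Winv (Wfun (wext w) n + β)))⁻¹) :=
  stmt16_general w hpos hmono Winv hWinv' β hβpos hβ
end
end

section
/- Let (Rₙ, Bₙ) be a w-urn process (Rₙ + Bₙ = n, and at each step a red ball is added with conditional probability w(Rₙ)/(w(Rₙ)+w(Bₙ)), otherwise a blue ball). Then M̂ₙ := W(Rₙ) − W(Bₙ) is a martingale with respect to the natural filtration, and E[M̂ₙ²] ≤ 2 ∑_{k=0}^∞ 1/w(k)²; in particular, if ∑ₖ 1/w(k)² < ∞ then M̂ₙ converges a.s. and in L². -/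
/-!
The increment of `M̂ₙ = W(Rₙ) - W(Bₙ)` is `(1/w(Rₙ) + 1/w(Bₙ)) · 𝟙{red ball} - 1/w(Bₙ)`, and the
red-ball probability `w(Rₙ)/(w(Rₙ) + w(Bₙ))` makes its conditional mean vanish. The squared
increment is `1/w(Rₙ)²` or `1/w(Bₙ)²`, so by orthogonality of martingale increments
`E[M̂ₙ²] = E[V(Rₙ) + V(Bₙ)]` with `V = Wd (w ^ 2)`, which is at most `2 ∑ₖ 1/w(k)²`.
An `L²`-bounded martingale is `L¹`-bounded, hence converges a.s., and Fatou's lemma applied to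
`E[(M̂ₙ - M̂ₚ)²] = E[M̂ₚ²] - E[M̂ₙ²]` as `p → ∞` upgrades this to convergence in `L²`.
-/

open MeasureTheory Filter Topology Set ProbabilityTheory
open scoped ENNReal NNReal

noncomputable section

/-- Discrete primitive of `1/w`: `Wd w m = W(m) = ∑_{k<m} 1/w(k)`. -/
def Wd (w : ℕ → ℝ) (m : ℕ) : ℝ := ∑ k ∈ Finset.range m, (w k)⁻¹

lemma memLp_comp_of_forall_mem {Ω α : Type*} {m0 : MeasurableSpace Ω} {μ : Measure Ω}
    [IsFiniteMeasure μ] [MeasurableSpace α] [DiscreteMeasurableSpace α] {X : Ω → α}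
    (hX : Measurable X) {s : Finset α} (hXs : ∀ ω, X ω ∈ s) (f : α → ℝ) (p : ℝ≥0∞) :
    MemLp (fun ω => f (X ω)) p μ :=
  MemLp.of_bound (Measurable.of_discrete.comp hX).aestronglyMeasurable (∑ a ∈ s, ‖f a‖)
    (ae_of_all _ fun ω => Finset.single_le_sum (fun a _ => norm_nonneg (f a)) (hXs ω))

lemma eLpNorm_one_le_integral_sq_add {Ω : Type*} {m0 : MeasurableSpace Ω} {μ : Measure Ω}
    [IsFiniteMeasure μ] {f : Ω → ℝ} (hf : MemLp f 2 μ) :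
    eLpNorm f 1 μ ≤ ENNReal.ofReal (∫ ω, f ω ^ 2 ∂μ + μ.real univ) := by
  have hint : Integrable f μ := hf.integrable one_le_two
  have habs : ∫ ω, |f ω| ∂μ ≤ ∫ ω, (f ω ^ 2 + 1) ∂μ :=
    integral_mono hint.abs (hf.integrable_sq.add (integrable_const 1))
      fun ω => by nlinarith [sq_nonneg (|f ω| - 1), sq_abs (f ω)]
  rw [eLpNorm_one_eq_lintegral_enorm, ← ofReal_integral_norm_eq_lintegral_enorm hint]
  refine ENNReal.ofReal_le_ofReal (habs.trans_eq ?_)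
  rw [integral_add hf.integrable_sq (integrable_const 1)]
  simp

namespace MeasureTheory.Martingale

variable {Ω : Type*} {m0 : MeasurableSpace Ω} {μ : Measure Ω} {ℱ : Filtration ℕ m0}
  {M : ℕ → Ω → ℝ}

theorem integral_mul_eq_integral_sq [IsFiniteMeasure μ] (hM : Martingale M ℱ μ)
    (hL2 : ∀ n, MemLp (M n) 2 μ) {m n : ℕ} (hmn : m ≤ n) :
    ∫ ω, M m ω * M n ω ∂μ = ∫ ω, M m ω ^ 2 ∂μ := by
  have hpull : μ[M m * M n | ℱ m] =ᵐ[μ] M m * M m := by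
    filter_upwards [condExp_mul_of_stronglyMeasurable_left (hM.stronglyAdapted m)
      ((hL2 m).integrable_mul (hL2 n)) (hM.integrable n), hM.condExp_ae_eq hmn] with ω h1 h2
    rw [h1, Pi.mul_apply, h2, Pi.mul_apply]
  calc ∫ ω, M m ω * M n ω ∂μ = ∫ ω, (μ[M m * M n | ℱ m]) ω ∂μ :=
        (integral_condExp (ℱ.le m)).symm
    _ = ∫ ω, M m ω ^ 2 ∂μ := by rw [integral_congr_ae hpull]; simp only [Pi.mul_apply, sq]

theorem integral_sub_sq [IsFiniteMeasure μ] (hM : Martingale M ℱ μ)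
    (hL2 : ∀ n, MemLp (M n) 2 μ) {m n : ℕ} (hmn : m ≤ n) :
    ∫ ω, (M n ω - M m ω) ^ 2 ∂μ = ∫ ω, M n ω ^ 2 ∂μ - ∫ ω, M m ω ^ 2 ∂μ := by
  have hexp : (fun ω => (M n ω - M m ω) ^ 2)
      = fun ω => M n ω ^ 2 + M m ω ^ 2 - 2 * (M m ω * M n ω) := by
    funext ω; ring
  have hsq : ∀ k, Integrable (fun ω => M k ω ^ 2) μ := fun k => (hL2 k).integrable_sq
  have hmul : Integrable (fun ω => 2 * (M m ω * M n ω)) μ :=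
    ((hL2 m).integrable_mul (hL2 n)).const_mul 2
  have hadd : Integrable (fun ω => M n ω ^ 2 + M m ω ^ 2) μ := (hsq n).add (hsq m)
  rw [hexp, integral_sub hadd hmul, integral_add (hsq n) (hsq m),
    integral_const_mul, hM.integral_mul_eq_integral_sq hL2 hmn]
  ring

theorem monotone_integral_sq [IsFiniteMeasure μ] (hM : Martingale M ℱ μ)
    (hL2 : ∀ n, MemLp (M n) 2 μ) : Monotone fun n => ∫ ω, M n ω ^ 2 ∂μ := fun _ _ hmn =>
  sub_nonneg.1 <| hM.integral_sub_sq hL2 hmn ▸ integral_nonneg fun _ => sq_nonneg _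

theorem integral_sub_limit_sq_le [IsFiniteMeasure μ] (hM : Martingale M ℱ μ)
    (hL2 : ∀ n, MemLp (M n) 2 μ) {Minf : Ω → ℝ}
    (hae : ∀ᵐ ω ∂μ, Tendsto (fun n => M n ω) atTop (𝓝 (Minf ω)))
    {L : ℝ} (hL : ∀ n, ∫ ω, M n ω ^ 2 ∂μ ≤ L) (n : ℕ) :
    ∫ ω, (M n ω - Minf ω) ^ 2 ∂μ ≤ L - ∫ ω, M n ω ^ 2 ∂μ := by
  have hmeas : ∀ p, AEMeasurable (fun ω => ENNReal.ofReal ((M n ω - M p ω) ^ 2)) μ :=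
    fun p => ENNReal.measurable_ofReal.comp_aemeasurable
      (((hL2 n).sub (hL2 p)).aestronglyMeasurable.aemeasurable.pow_const 2)
  have htail : ∀ p, n ≤ p →
      ∫⁻ ω, ENNReal.ofReal ((M n ω - M p ω) ^ 2) ∂μ ≤ ENNReal.ofReal (L - ∫ ω, M n ω ^ 2 ∂μ) := by
    intro p hnp
    have hint : Integrable (fun ω => (M n ω - M p ω) ^ 2) μ :=
      ((hL2 n).sub (hL2 p)).integrable_sq
    rw [← ofReal_integral_eq_lintegral_ofReal hint (ae_of_all _ fun _ => sq_nonneg _)]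
    simp only [sub_sq_comm (M n _)]
    exact ENNReal.ofReal_le_ofReal ((hM.integral_sub_sq hL2 hnp).trans_le (by linarith [hL p]))
  have hfatou : ∫⁻ ω, ENNReal.ofReal ((M n ω - Minf ω) ^ 2) ∂μ
      ≤ ENNReal.ofReal (L - ∫ ω, M n ω ^ 2 ∂μ) :=
    calc ∫⁻ ω, ENNReal.ofReal ((M n ω - Minf ω) ^ 2) ∂μ
        = ∫⁻ ω, liminf (fun p => ENNReal.ofReal ((M n ω - M p ω) ^ 2)) atTop ∂μ := by
          refine lintegral_congr_ae ?_
          filter_upwards [hae] with ω hω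
          exact ((ENNReal.continuous_ofReal.tendsto _).comp
            ((tendsto_const_nhds.sub hω).pow 2)).liminf_eq.symm
      _ ≤ liminf (fun p => ∫⁻ ω, ENNReal.ofReal ((M n ω - M p ω) ^ 2) ∂μ) atTop :=
          lintegral_liminf_le' hmeas
      _ ≤ ENNReal.ofReal (L - ∫ ω, M n ω ^ 2 ∂μ) :=
          liminf_le_of_frequently_le' ((eventually_ge_atTop n).mono htail).frequently
  have hMinf : AEStronglyMeasurable Minf μ :=
    aestronglyMeasurable_of_tendsto_ae atTop (fun p => (hL2 p).aestronglyMeasurable) hae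
  rw [integral_eq_lintegral_of_nonneg_ae (f := fun ω => (M n ω - Minf ω) ^ 2)
    (ae_of_all _ fun _ => sq_nonneg _)
    (((hL2 n).aestronglyMeasurable.sub hMinf).pow 2)]
  exact ENNReal.toReal_le_of_le_ofReal (by linarith [hL n]) hfatou

theorem exists_ae_tendsto_and_tendsto_integral_sq [IsFiniteMeasure μ] (hM : Martingale M ℱ μ)
    (hL2 : ∀ n, MemLp (M n) 2 μ) (hbdd : BddAbove (range fun n => ∫ ω, M n ω ^ 2 ∂μ)) :
    ∃ Minf : Ω → ℝ, (∀ᵐ ω ∂μ, Tendsto (fun n => M n ω) atTop (𝓝 (Minf ω))) ∧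
      Tendsto (fun n => ∫ ω, (M n ω - Minf ω) ^ 2 ∂μ) atTop (𝓝 0) := by
  obtain ⟨C, hC⟩ := hbdd
  have hC' : ∀ n, ∫ ω, M n ω ^ 2 ∂μ ≤ C := fun n => hC ⟨n, rfl⟩
  have hL1 : ∀ n, eLpNorm (M n) 1 μ ≤ (C + μ.real univ).toNNReal := fun n =>
    (eLpNorm_one_le_integral_sq_add (hL2 n)).trans
      (ENNReal.ofReal_le_ofReal (by linarith [hC' n]))
  have hae := hM.submartingale.ae_tendsto_limitProcess hL1
  refine ⟨ℱ.limitProcess M μ, hae, ?_⟩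
  have hlim : Tendsto (fun n => ∫ ω, M n ω ^ 2 ∂μ) atTop (𝓝 (⨆ n, ∫ ω, M n ω ^ 2 ∂μ)) :=
    tendsto_atTop_ciSup (hM.monotone_integral_sq hL2) ⟨C, hC⟩
  have hgap := hlim.const_sub (⨆ n, ∫ ω, M n ω ^ 2 ∂μ)
  rw [sub_self] at hgap
  exact squeeze_zero (fun n => integral_nonneg fun ω => sq_nonneg _)
    (hM.integral_sub_limit_sq_le hL2 hae (le_ciSup ⟨C, hC⟩)) hgap

end MeasureTheory.Martingale

lemma Wd_succ (w : ℕ → ℝ) (m : ℕ) : Wd w (m + 1) = Wd w m + (w m)⁻¹ :=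
  Finset.sum_range_succ _ _

lemma Wd_zero (w : ℕ → ℝ) : Wd w 0 = 0 := Finset.sum_range_zero _

lemma Wd_mono {w : ℕ → ℝ} (hw : ∀ k, 0 ≤ w k) : Monotone (Wd w) := fun _ _ hmn =>
  Finset.sum_le_sum_of_subset_of_nonneg (Finset.range_subset_range.2 hmn)
    fun k _ _ => inv_nonneg.2 (hw k)

lemma ofReal_Wd_le_tsum {w : ℕ → ℝ} (hw : ∀ k, 0 ≤ w k) (n : ℕ) :
    ENNReal.ofReal (Wd w n) ≤ ∑' k, ENNReal.ofReal (w k)⁻¹ := by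
  rw [Wd, ENNReal.ofReal_sum_of_nonneg fun k _ => inv_nonneg.2 (hw k)]
  exact ENNReal.sum_le_tsum _

section Urn

variable {Ω : Type*} {R B : ℕ → Ω → ℕ}

lemma urn_step_cases (hsum : ∀ n ω, R n ω + B n ω = n)
    (hstep : ∀ n ω, R (n + 1) ω = R n ω ∨ R (n + 1) ω = R n ω + 1) (n : ℕ) (ω : Ω) :
    (R (n + 1) ω = R n ω + 1 ∧ B (n + 1) ω = B n ω) ∨
      (R (n + 1) ω = R n ω ∧ B (n + 1) ω = B n ω + 1) := by
  have := hsum n ω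
  have := hsum (n + 1) ω
  rcases hstep n ω with h | h <;> omega

lemma Wd_urn_increment (w : ℕ → ℝ) (hsum : ∀ n ω, R n ω + B n ω = n)
    (hstep : ∀ n ω, R (n + 1) ω = R n ω ∨ R (n + 1) ω = R n ω + 1) (n : ℕ) (ω : Ω) :
    Wd w (R (n + 1) ω) - Wd w (B (n + 1) ω) - (Wd w (R n ω) - Wd w (B n ω)) =
      ((w (R n ω))⁻¹ + (w (B n ω))⁻¹) * (if R (n + 1) ω = R n ω + 1 then 1 else 0)
        - (w (B n ω))⁻¹ := by
  rcases urn_step_cases hsum hstep n ω with ⟨hR, hB⟩ | ⟨hR, hB⟩ <;>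
    simp [hR, hB, Wd_succ]

lemma sq_Wd_urn_increment (w : ℕ → ℝ) (hsum : ∀ n ω, R n ω + B n ω = n)
    (hstep : ∀ n ω, R (n + 1) ω = R n ω ∨ R (n + 1) ω = R n ω + 1) (n : ℕ) (ω : Ω) :
    (Wd w (R (n + 1) ω) - Wd w (B (n + 1) ω) - (Wd w (R n ω) - Wd w (B n ω))) ^ 2 =
      Wd (w ^ 2) (R (n + 1) ω) + Wd (w ^ 2) (B (n + 1) ω)
        - (Wd (w ^ 2) (R n ω) + Wd (w ^ 2) (B n ω)) := by
  rcases urn_step_cases hsum hstep n ω with ⟨hR, hB⟩ | ⟨hR, hB⟩ <;>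
    simp [hR, hB, Wd_succ]

variable {m0 : MeasurableSpace Ω} {μ : Measure Ω}

lemma memLp_urn_comp [IsFiniteMeasure μ] (hR : ∀ n, Measurable (R n))
    (hB : ∀ n, Measurable (B n))
    (hsum : ∀ n ω, R n ω + B n ω = n) (f : ℕ → ℕ → ℝ) (p : ℝ≥0∞) (n : ℕ) :
    MemLp (fun ω => f (R n ω) (B n ω)) p μ :=
  memLp_comp_of_forall_mem ((hR n).prodMk (hB n))
    (s := Finset.range (n + 1) ×ˢ Finset.range (n + 1))
    (fun ω => by have := hsum n ω; simp only [Finset.mem_product, Finset.mem_range]; omega)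
    (fun x => f x.1 x.2) p

variable {ℱ : Filtration ℕ m0}

theorem martingale_Wd_urn [IsFiniteMeasure μ] (w : ℕ → ℝ) (hpos : ∀ k, 0 < w k)
    (hadapR : ∀ n, Measurable[ℱ n] (R n)) (hadapB : ∀ n, Measurable[ℱ n] (B n))
    (hsum : ∀ n ω, R n ω + B n ω = n)
    (hstep : ∀ n ω, R (n + 1) ω = R n ω ∨ R (n + 1) ω = R n ω + 1)
    (hcond : ∀ n,
      (μ[(fun ω => if R (n + 1) ω = R n ω + 1 then (1 : ℝ) else 0) | ℱ n])
        =ᵐ[μ] fun ω => w (R n ω) / (w (R n ω) + w (B n ω))) :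
    Martingale (fun n ω => Wd w (R n ω) - Wd w (B n ω)) ℱ μ := by
  have hR : ∀ n, Measurable (R n) := fun n => (hadapR n).mono (ℱ.le n) le_rfl
  have hB : ∀ n, Measurable (B n) := fun n => (hadapB n).mono (ℱ.le n) le_rfl
  have hF : ∀ (n : ℕ) (f : ℕ → ℕ → ℝ), StronglyMeasurable[ℱ n] fun ω => f (R n ω) (B n ω) :=
    fun n f => ((Measurable.of_discrete (f := fun x : ℕ × ℕ => f x.1 x.2)).comp
      ((hadapR n).prodMk (hadapB n))).stronglyMeasurable
  refine martingale_of_condExp_sub_eq_zero_nat (fun n => hF n fun a b => Wd w a - Wd w b)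
    (fun n => memLp_one_iff_integrable.1 <|
      memLp_urn_comp hR hB hsum (fun a b => Wd w a - Wd w b) 1 n) fun n => ?_
  set g : Ω → ℝ := fun ω => (w (R n ω))⁻¹ + (w (B n ω))⁻¹
  set h : Ω → ℝ := fun ω => (w (B n ω))⁻¹
  set I : Ω → ℝ := fun ω => if R (n + 1) ω = R n ω + 1 then 1 else 0
  have hincr : (fun ω => Wd w (R (n + 1) ω) - Wd w (B (n + 1) ω))
      - (fun ω => Wd w (R n ω) - Wd w (B n ω)) = g * I - h :=
    funext (Wd_urn_increment w hsum hstep n)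
  have hI : Integrable I μ := memLp_one_iff_integrable.1 <|
    memLp_comp_of_forall_mem ((hR (n + 1)).prodMk (hR n))
      (s := Finset.range (n + 2) ×ˢ Finset.range (n + 1))
      (fun ω => by
        have := hsum n ω
        have := hsum (n + 1) ω
        simp only [Finset.mem_product, Finset.mem_range]
        omega)
      (fun x => if x.1 = x.2 + 1 then 1 else 0) 1
  have hgI : Integrable (g * I) μ := hI.mul_of_top_right
    (memLp_urn_comp hR hB hsum (fun a b => (w a)⁻¹ + (w b)⁻¹) ⊤ n)
  have hh : Integrable h μ := memLp_one_iff_integrable.1 <|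
    memLp_urn_comp hR hB hsum (fun _ b => (w b)⁻¹) 1 n
  rw [hincr]
  filter_upwards [condExp_sub hgI hh (ℱ n),
    condExp_mul_of_stronglyMeasurable_left (hF n fun a b => (w a)⁻¹ + (w b)⁻¹) hgI hI,
    hcond n] with ω hsub hmul hp
  rw [hsub, Pi.sub_apply, hmul, Pi.mul_apply, hp,
    condExp_of_stronglyMeasurable (ℱ.le n) (hF n fun _ b => (w b)⁻¹) hh]
  have := hpos (R n ω)
  have := hpos (B n ω)
  rw [Pi.zero_apply]
  field_simp
  ring

theorem integral_sq_Wd_urn_le [IsProbabilityMeasure μ] (w : ℕ → ℝ)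
    (hmart : Martingale (fun n ω => Wd w (R n ω) - Wd w (B n ω)) ℱ μ)
    (hR : ∀ n, Measurable (R n)) (hB : ∀ n, Measurable (B n))
    (hsum : ∀ n ω, R n ω + B n ω = n)
    (hstep : ∀ n ω, R (n + 1) ω = R n ω ∨ R (n + 1) ω = R n ω + 1) (n : ℕ) :
    ∫ ω, (Wd w (R n ω) - Wd w (B n ω)) ^ 2 ∂μ ≤ 2 * Wd (w ^ 2) n := by
  have hL2 : ∀ n, MemLp (fun ω => Wd w (R n ω) - Wd w (B n ω)) 2 μ :=
    memLp_urn_comp hR hB hsum (fun a b => Wd w a - Wd w b) 2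
  have hQ : ∀ n, Integrable (fun ω => Wd (w ^ 2) (R n ω) + Wd (w ^ 2) (B n ω)) μ := fun n =>
    memLp_one_iff_integrable.1 <|
      memLp_urn_comp hR hB hsum (fun a b => Wd (w ^ 2) a + Wd (w ^ 2) b) 1 n
  have heq : ∀ n, ∫ ω, (Wd w (R n ω) - Wd w (B n ω)) ^ 2 ∂μ
      = ∫ ω, (Wd (w ^ 2) (R n ω) + Wd (w ^ 2) (B n ω)) ∂μ := by
    intro n
    induction n with
    | zero =>
      have h0 : ∀ ω, R 0 ω = 0 ∧ B 0 ω = 0 := fun ω => by have := hsum 0 ω; omega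
      simp [h0, Wd_zero]
    | succ n ih =>
      have h := hmart.integral_sub_sq hL2 (Nat.le_succ n)
      beta_reduce at h
      rw [funext (sq_Wd_urn_increment w hsum hstep n), integral_sub (hQ _) (hQ _), ih] at h
      linarith
  have hw : ∀ k, 0 ≤ (w ^ 2) k := fun k => sq_nonneg (w k)
  calc ∫ ω, (Wd w (R n ω) - Wd w (B n ω)) ^ 2 ∂μ
      = ∫ ω, (Wd (w ^ 2) (R n ω) + Wd (w ^ 2) (B n ω)) ∂μ := heq n
    _ ≤ ∫ _, 2 * Wd (w ^ 2) n ∂μ := integral_mono (hQ n) (integrable_const _) fun ω => by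
        have := hsum n ω
        linarith [Wd_mono hw (show R n ω ≤ n by omega), Wd_mono hw (show B n ω ≤ n by omega)]
    _ = 2 * Wd (w ^ 2) n := by simp

end Urn

/-- for a `w`-urn process `(Rₙ,Bₙ)` (`Rₙ+Bₙ = n`, a red ball is added with
conditional probability `w(Rₙ)/(w(Rₙ)+w(Bₙ))`), the process `M̂ₙ = W(Rₙ) − W(Bₙ)` is a
martingale, `E[M̂ₙ²] ≤ 2 ∑ₖ 1/w(k)²`, and if `∑ₖ 1/w(k)² < ∞` then `M̂ₙ` converges a.s.
and in `L²`. -/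
theorem stmt19 {Ω : Type*} {m0 : MeasurableSpace Ω} (μ : Measure Ω)
    [IsProbabilityMeasure μ]
    (w : ℕ → ℝ) (hpos : ∀ k, 0 < w k)
    (ℱ : Filtration ℕ m0)
    (R B : ℕ → Ω → ℕ)
    (hadapR : ∀ n, @Measurable Ω ℕ (ℱ n) _ (R n))
    (hadapB : ∀ n, @Measurable Ω ℕ (ℱ n) _ (B n))
    (hsum : ∀ n ω, R n ω + B n ω = n)
    (hstep : ∀ n ω, R (n + 1) ω = R n ω ∨ R (n + 1) ω = R n ω + 1)
    (hcond : ∀ n,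
      (μ[(fun ω => if R (n + 1) ω = R n ω + 1 then (1 : ℝ) else 0) | ℱ n])
        =ᵐ[μ] fun ω => w (R n ω) / (w (R n ω) + w (B n ω))) :
    Martingale (fun n ω => Wd w (R n ω) - Wd w (B n ω)) ℱ μ ∧
    (∀ n, ∫⁻ ω, ENNReal.ofReal ((Wd w (R n ω) - Wd w (B n ω)) ^ 2) ∂μ
        ≤ 2 * ∑' k : ℕ, ENNReal.ofReal (((w k) ^ 2)⁻¹)) ∧
    (Summable (fun k : ℕ => ((w k) ^ 2)⁻¹) →
      ∃ Minf : Ω → ℝ,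
        (∀ᵐ ω ∂μ, Tendsto (fun n => Wd w (R n ω) - Wd w (B n ω)) atTop (nhds (Minf ω))) ∧
        Tendsto (fun n => ∫ ω, (Wd w (R n ω) - Wd w (B n ω) - Minf ω) ^ 2 ∂μ)
          atTop (nhds 0)) := by
  have hR : ∀ n, Measurable (R n) := fun n => (hadapR n).mono (ℱ.le n) le_rfl
  have hB : ∀ n, Measurable (B n) := fun n => (hadapB n).mono (ℱ.le n) le_rfl
  have hmart := martingale_Wd_urn w hpos hadapR hadapB hsum hstep hcond
  have hL2 : ∀ n, MemLp (fun ω => Wd w (R n ω) - Wd w (B n ω)) 2 μ :=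
    memLp_urn_comp hR hB hsum (fun a b => Wd w a - Wd w b) 2
  have hsecond := integral_sq_Wd_urn_le w hmart hR hB hsum hstep
  refine ⟨hmart, fun n => ?_, fun hsummable =>
    hmart.exists_ae_tendsto_and_tendsto_integral_sq hL2 ⟨2 * ∑' k, ((w k) ^ 2)⁻¹, ?_⟩⟩
  · rw [← ofReal_integral_eq_lintegral_ofReal (hL2 n).integrable_sq
      (ae_of_all _ fun _ => sq_nonneg _)]
    calc ENNReal.ofReal (∫ ω, (Wd w (R n ω) - Wd w (B n ω)) ^ 2 ∂μ)
        ≤ ENNReal.ofReal (2 * Wd (w ^ 2) n) := ENNReal.ofReal_le_ofReal (hsecond n)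
      _ ≤ 2 * ∑' k : ℕ, ENNReal.ofReal (((w k) ^ 2)⁻¹) := by
        rw [ENNReal.ofReal_mul zero_le_two, ENNReal.ofReal_ofNat]
        gcongr
        exact ofReal_Wd_le_tsum (fun k => sq_nonneg (w k)) n
  · rintro _ ⟨n, rfl⟩
    refine (hsecond n).trans (mul_le_mul_of_nonneg_left ?_ zero_le_two)
    exact hsummable.sum_le_tsum _ fun k _ => inv_nonneg.2 (sq_nonneg (w k))
end
end
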